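/- arXiv:0811.0941 — 4 statements merged into one kernel-verified Lean document; each statement's English description precedes it below -/
import Mathlib

section
/- Let ε > 0, k_x > 0, k_y ≠ 0 be real numbers and let C = 2√(1 + k_x²/(ε|k_y|)). Then for every ν > 0 and every real η, one has (1 + η²) / |1 + √(1 − (2εk_y/k_x²)η + 2iεν k_y²/k_x²)|⁴ ≤ C⁴/16, where √ is the principal complex square root. -/
open Complex

/-! With `w = z ^ (1/2)` the principal square root, `Re w ≥ 0` gives
`‖1 + w‖² = 1 + 2 Re w + ‖z‖ ≥ 1 + ‖z‖ ≥ 1 + |Re z|`, where `Re z = 1 - aη` with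
`a = 2εk_y/k_x²`. Since `K = k_x²/(ε|k_y|)` satisfies `K|a| = 2`, the triangle inequality gives
`2|η| = K|aη| ≤ K(1 + |1 - aη|)`, hence `1 + |η| ≤ (1 + K)‖1 + w‖²`. Squaring, and using
`1 + η² ≤ (1 + |η|)²` and `C⁴/16 = (1 + K)²`, yields the bound. -/

namespace Complex

theorem re_cpow_one_half_nonneg (z : ℂ) : 0 ≤ (z ^ (1 / 2 : ℂ)).re := by
  rw [one_div, cpow_inv_two_re]
  exact Real.sqrt_nonneg _

theorem one_add_norm_le_norm_one_add_cpow_one_half_sq (z : ℂ) :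
    1 + ‖z‖ ≤ ‖1 + z ^ (1 / 2 : ℂ)‖ ^ 2 := by
  have hsq : ‖z ^ (1 / 2 : ℂ)‖ ^ 2 = ‖z‖ := by
    rw [← norm_pow, one_div, cpow_ofNat_inv_pow]
  have hexpand : ‖1 + z ^ (1 / 2 : ℂ)‖ ^ 2
      = ‖z ^ (1 / 2 : ℂ)‖ ^ 2 + 2 * (z ^ (1 / 2 : ℂ)).re + 1 := by
    simp only [Complex.sq_norm, normSq_apply, add_re, add_im, one_re, one_im]
    ring
  linarith [re_cpow_one_half_nonneg z]

end Complex

theorem one_add_abs_le_mul_one_add_abs_one_sub {K a : ℝ} (hK : 0 ≤ K) (hKa : K * |a| = 2)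
    (η : ℝ) : 1 + |η| ≤ (1 + K) * (1 + |1 - a * η|) := by
  have hη : 2 * |η| = K * |a * η| := by rw [abs_mul, ← mul_assoc, hKa]
  have htri : |a * η| ≤ 1 + |1 - a * η| := by
    have := abs_sub_abs_le_abs_sub (a * η) 1
    rw [abs_sub_comm, abs_one] at this
    linarith
  nlinarith [abs_nonneg (1 - a * η), mul_le_mul_of_nonneg_left htri hK]

theorem stmt_2_general (ε kx ky : ℝ) (hε : 0 < ε) (hkx : 0 < kx) (hky : ky ≠ 0)
    (C : ℝ) (hC : C = 2 * Real.sqrt (1 + kx ^ 2 / (ε * |ky|)))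
    (ν : ℝ) (η : ℝ) :
    (1 + η ^ 2) /
      ‖(1 + ((1 : ℂ) - (2 * ε * ky / kx ^ 2 : ℝ) * (η : ℂ)
          + 2 * (ε : ℂ) * (ν : ℂ) * (ky : ℂ) ^ 2 / (kx : ℂ) ^ 2 * I) ^ ((1 : ℂ) / 2))‖ ^ 4
      ≤ C ^ 4 / 16 := by
  set a : ℝ := 2 * ε * ky / kx ^ 2
  set K : ℝ := kx ^ 2 / (ε * |ky|)
  set z : ℂ := 1 - a * η + 2 * (ε : ℂ) * ν * ky ^ 2 / kx ^ 2 * I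
  have hK : 0 ≤ K := by positivity
  have hKa : K * |a| = 2 := by
    simp only [a, K]
    rw [abs_div, abs_mul, abs_mul, abs_of_pos hε, abs_two, abs_of_pos (by positivity : 0 < kx ^ 2)]
    field_simp
  have hC4 : C ^ 4 / 16 = (1 + K) ^ 2 := by
    rw [hC, show (2 * √(1 + K)) ^ 4 / 16 = (√(1 + K) ^ 2) ^ 2 by ring, Real.sq_sqrt (by positivity)]
  have hre : |1 - a * η| ≤ ‖z‖ := by
    have hz : z = ((1 - a * η : ℝ) : ℂ) + ((2 * ε * ν * ky ^ 2 / kx ^ 2 : ℝ) : ℂ) * I := by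
      push_cast; ring
    have hzre : z.re = 1 - a * η := by
      rw [hz, add_re, ofReal_re, re_ofReal_mul, I_re, mul_zero, add_zero]
    exact hzre ▸ abs_re_le_norm z
  have hroot := one_add_norm_le_norm_one_add_cpow_one_half_sq z
  rw [hC4, div_le_iff₀ (by nlinarith [norm_nonneg z])]
  calc 1 + η ^ 2 ≤ (1 + |η|) ^ 2 := by nlinarith [abs_nonneg η, sq_abs η]
    _ ≤ ((1 + K) * (1 + |1 - a * η|)) ^ 2 := by
      gcongr; exact one_add_abs_le_mul_one_add_abs_one_sub hK hKa η
    _ ≤ ((1 + K) * ‖1 + z ^ (1 / 2 : ℂ)‖ ^ 2) ^ 2 := by gcongr; linarith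
    _ = (1 + K) ^ 2 * ‖1 + z ^ (1 / 2 : ℂ)‖ ^ 4 := by ring

theorem stmt_2 (ε kx ky : ℝ) (hε : 0 < ε) (hkx : 0 < kx) (hky : ky ≠ 0)
    (C : ℝ) (hC : C = 2 * Real.sqrt (1 + kx ^ 2 / (ε * |ky|)))
    (ν : ℝ) (hν : 0 < ν) (η : ℝ) :
    (1 + η ^ 2) /
      ‖(1 + ((1 : ℂ) - (2 * ε * ky / kx ^ 2 : ℝ) * (η : ℂ)
          + 2 * (ε : ℂ) * (ν : ℂ) * (ky : ℂ) ^ 2 / (kx : ℂ) ^ 2 * I) ^ ((1 : ℂ) / 2))‖ ^ 4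
      ≤ C ^ 4 / 16 :=
  stmt_2_general ε kx ky hε hkx hky C hC ν η
end

section
/- Let ε, k_x, ν > 0 and k_y ≠ 0 be real, and for real η define R_±(iη) = i(k_x/k_y)η − i(k_x/(ε k_y²))·(1 ± √(1 − (2εk_y/k_x²)η + 2iν ε k_y²/k_x²)), with √ the principal square root. Then Re(R_+(iη)) > 0, Re(R_−(iη)) < 0, and Re(R_+(iη)) = −Re(R_−(iη)). -/
/-!
Writing `c = kx / (ε ky²) > 0` and `s` for the principal square root of
`w = 1 - (2 ε ky / kx²) η + 2 i ν ε ky² / kx²`, the real parts are `Re R_± = ± c · Im s`,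
since `i (kx / ky) η` is purely imaginary. As `Im w > 0`, `w` has argument in `(0, π)`,
so `s` has argument in `(0, π/2]` and `Im s > 0`.
-/

open Complex

lemma Complex.im_cpow_one_half_pos {z : ℂ} (hz : 0 < z.im) : 0 < (z ^ (1 / 2 : ℂ)).im := by
  have hz0 : z ≠ 0 := by rintro rfl; simp at hz
  have harg : 0 < z.arg :=
    (arg_nonneg_iff.2 hz.le).lt_of_ne fun h => hz.ne' (arg_eq_zero_iff.1 h.symm).2
  have him : (log z * (1 / 2)).im = z.arg / 2 := by simp [log_im, div_eq_mul_inv]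
  rw [cpow_def_of_ne_zero hz0, exp_im, him]
  exact mul_pos (Real.exp_pos _)
    (Real.sin_pos_of_pos_of_lt_pi (by linarith) (by linarith [arg_le_pi z, Real.pi_pos]))

lemma Complex.re_I_mul_ofReal_mul_ofReal_sub_I_mul_one_add (a b c : ℝ) (s : ℂ) :
    (I * a * b - I * c * (1 + s)).re = c * s.im := by
  simp

lemma Complex.re_I_mul_ofReal_mul_ofReal_sub_I_mul_one_sub (a b c : ℝ) (s : ℂ) :
    (I * a * b - I * c * (1 - s)).re = -(c * s.im) := by
  simp

theorem stmt_4 (ε kx ky ν : ℝ) (hε : 0 < ε) (hkx : 0 < kx) (hky : ky ≠ 0) (hν : 0 < ν)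
    (η : ℝ)
    (Rplus Rminus : ℂ)
    (hp : Rplus = I * (kx / ky : ℝ) * (η : ℂ) - I * ((kx / (ε * ky ^ 2) : ℝ) : ℂ) *
      (1 + ((1 : ℂ) - ((2 * ε * ky / kx ^ 2 : ℝ) : ℂ) * (η : ℂ)
        + 2 * (ν : ℂ) * (ε : ℂ) * (ky : ℂ) ^ 2 / (kx : ℂ) ^ 2 * I) ^ ((1 : ℂ) / 2)))
    (hm : Rminus = I * (kx / ky : ℝ) * (η : ℂ) - I * ((kx / (ε * ky ^ 2) : ℝ) : ℂ) *
      (1 - ((1 : ℂ) - ((2 * ε * ky / kx ^ 2 : ℝ) : ℂ) * (η : ℂ)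
        + 2 * (ν : ℂ) * (ε : ℂ) * (ky : ℂ) ^ 2 / (kx : ℂ) ^ 2 * I) ^ ((1 : ℂ) / 2))) :
    0 < Rplus.re ∧ Rminus.re < 0 ∧ Rplus.re = -Rminus.re := by
  set w : ℂ := (1 : ℂ) - ((2 * ε * ky / kx ^ 2 : ℝ) : ℂ) * (η : ℂ)
    + 2 * (ν : ℂ) * (ε : ℂ) * (ky : ℂ) ^ 2 / (kx : ℂ) ^ 2 * I
  have hw_eq : w = ((1 - 2 * ε * ky / kx ^ 2 * η : ℝ) : ℂ)
      + ((2 * ν * ε * ky ^ 2 / kx ^ 2 : ℝ) : ℂ) * I := by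
    simp only [w]; push_cast; ring
  have hw : 0 < w.im := by
    rw [hw_eq, add_im, ofReal_im, mul_I_im, ofReal_re, zero_add]
    positivity
  have hc : 0 < kx / (ε * ky ^ 2) := by positivity
  have hRe := mul_pos hc (im_cpow_one_half_pos hw)
  rw [hp, hm, re_I_mul_ofReal_mul_ofReal_sub_I_mul_one_add,
    re_I_mul_ofReal_mul_ofReal_sub_I_mul_one_sub]
  exact ⟨hRe, neg_neg_of_pos hRe, (neg_neg _).symm⟩
end

section
/- Let ε, k_x, ν > 0 and k_y ≠ 0 be real, and let R_−(iη) = i(k_x/k_y)η − i(k_x/(ε k_y²))(1 − √(1 − (2εk_y/k_x²)η + 2iνε k_y²/k_x²)). Then for all x ≥ 0 and all real η, |e^{R_−(iη)·x}| ≤ 1. -/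
open Complex

/-- The principal root halves the argument: `arg z ∈ [0, π]` gives `arg z / 2 ∈ [0, π / 2]`. -/
lemma Complex.im_cpow_half_nonneg {z : ℂ} (hz : 0 ≤ z.im) : 0 ≤ (z ^ (1 / 2 : ℂ)).im := by
  rcases eq_or_ne z 0 with rfl | hz0
  · simp
  have hlog : (log z * (1 / 2 : ℂ)).im = arg z / 2 := by
    rw [show (1 / 2 : ℂ) = ((1 / 2 : ℝ) : ℂ) by norm_num, mul_im, ofReal_re, ofReal_im, log_im]
    ring
  rw [cpow_def_of_ne_zero hz0, exp_im, hlog]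
  have harg_nonneg : 0 ≤ arg z := arg_nonneg_iff.2 hz
  have harg_le : arg z ≤ Real.pi := arg_le_pi z
  exact mul_nonneg (Real.exp_nonneg _)
    (Real.sin_nonneg_of_nonneg_of_le_pi (by linarith) (by linarith [Real.pi_pos]))

lemma Complex.re_I_mul_sub_I_mul_one_sub (a b : ℝ) (w : ℂ) :
    (I * a - I * b * (1 - w)).re = -b * w.im := by
  simp only [sub_re, mul_re, mul_im, one_re, one_im, sub_im, I_re, I_im, ofReal_re, ofReal_im]
  ring

lemma Complex.norm_exp_mul_ofReal_le_one {z : ℂ} (hz : z.re ≤ 0) {x : ℝ} (hx : 0 ≤ x) :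
    ‖exp (z * x)‖ ≤ 1 := by
  rw [norm_exp, re_mul_ofReal, Real.exp_le_one_iff]
  exact mul_nonpos_of_nonpos_of_nonneg hz hx

theorem stmt_7_general (ε kx ky ν : ℝ) (hε : 0 < ε) (hkx : 0 < kx) (hν : 0 < ν)
    (η : ℝ)
    (Rminus : ℂ)
    (hm : Rminus = I * (kx / ky : ℝ) * (η : ℂ) - I * ((kx / (ε * ky ^ 2) : ℝ) : ℂ) *
      (1 - ((1 : ℂ) - ((2 * ε * ky / kx ^ 2 : ℝ) : ℂ) * (η : ℂ)
        + 2 * (ν : ℂ) * (ε : ℂ) * (ky : ℂ) ^ 2 / (kx : ℂ) ^ 2 * I) ^ ((1 : ℂ) / 2)))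
    (x : ℝ) (hx : 0 ≤ x) :
    ‖Complex.exp (Rminus * (x : ℂ))‖ ≤ 1 := by
  set z : ℂ := (1 : ℂ) - ((2 * ε * ky / kx ^ 2 : ℝ) : ℂ) * (η : ℂ)
      + 2 * (ν : ℂ) * (ε : ℂ) * (ky : ℂ) ^ 2 / (kx : ℂ) ^ 2 * I
  have hz_im : 0 ≤ z.im := by
    have : z = ((1 - 2 * ε * ky / kx ^ 2 * η : ℝ) : ℂ)
        + ((2 * ν * ε * ky ^ 2 / kx ^ 2 : ℝ) : ℂ) * I := by
      simp only [z]; push_cast; ring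
    rw [this, add_im, ofReal_im, im_ofReal_mul, I_im, mul_one, zero_add]
    positivity
  have hRe : Rminus.re ≤ 0 := by
    rw [hm, mul_assoc I, ← ofReal_mul, re_I_mul_sub_I_mul_one_sub, neg_mul]
    exact neg_nonpos.2 (mul_nonneg (by positivity) (im_cpow_half_nonneg hz_im))
  exact norm_exp_mul_ofReal_le_one hRe hx

theorem stmt_7 (ε kx ky ν : ℝ) (hε : 0 < ε) (hkx : 0 < kx) (hky : ky ≠ 0) (hν : 0 < ν)
    (η : ℝ)
    (Rminus : ℂ)
    (hm : Rminus = I * (kx / ky : ℝ) * (η : ℂ) - I * ((kx / (ε * ky ^ 2) : ℝ) : ℂ) *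
      (1 - ((1 : ℂ) - ((2 * ε * ky / kx ^ 2 : ℝ) : ℂ) * (η : ℂ)
        + 2 * (ν : ℂ) * (ε : ℂ) * (ky : ℂ) ^ 2 / (kx : ℂ) ^ 2 * I) ^ ((1 : ℂ) / 2)))
    (x : ℝ) (hx : 0 ≤ x) :
    ‖Complex.exp (Rminus * (x : ℂ))‖ ≤ 1 :=
  stmt_7_general ε kx ky ν hε hkx hν η Rminus hm x hx
end

section
/- Let ε, k_x, ν > 0, k_y ≠ 0, and let ĝ ∈ L²(ℝ, ℂ) be such that η ↦ (1+η²)^{−1/4} ĝ(η) is in L². Define for x ≥ 0 and η ∈ ℝ: û(x,η) = 2ĝ(η)·e^{R_−(iη)x} / (1 + √(1 − (2εk_y/k_x²)η + 2iεν k_y²/k_x²)), with R_− as in the half-space problem. Then for every x ≥ 0, ∫_ℝ |û(x,η)|² dη ≤ C² ∫_ℝ |ĝ(η)|² (1+η²)^{−1/2} dη, where C = 2√(1 + k_x²/(ε|k_y|)). -/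
/-!
With `a = 2εk_y/k_x²` and `w = 1 - aη + 2iενk_y²/k_x²`, the principal root `s = √w` has
`Re s ≥ 0`, and `Im s ≥ 0` because `Im w > 0`. The second gives
`Re R₋ = -(k_x/(εk_y²)) Im s ≤ 0`, so the exponential factor has modulus at most `1`. The first
gives `|1 + s|² = 1 + 2 Re s + |w| ≥ 1 + |1 - aη|`, and `1 + |1 - aη|` dominates
`√(1 + η²) / (1 + 1/|a|)`. Hence `|û(x,η)|² ≤ C² |ĝ(η)|² (1 + η²)^(-1/2)` pointwise, and one
integrates.
-/

open Complex MeasureTheory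

namespace Complex

lemma re_cpow_one_div_two_nonneg (w : ℂ) : 0 ≤ (w ^ (1 / 2 : ℂ)).re := by
  rw [one_div, cpow_inv_two_re]
  exact Real.sqrt_nonneg _

lemma im_cpow_one_div_two_nonneg {w : ℂ} (hw : 0 ≤ w.im) : 0 ≤ (w ^ (1 / 2 : ℂ)).im := by
  rw [one_div, cpow_inv_two_im_eq_sqrt hw]
  exact Real.sqrt_nonneg _

lemma norm_cpow_one_div_two_sq (w : ℂ) : ‖w ^ (1 / 2 : ℂ)‖ ^ 2 = ‖w‖ := by
  rw [← norm_pow, one_div, cpow_ofNat_inv_pow]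

lemma one_add_norm_le_norm_one_add_cpow_one_div_two_sq (w : ℂ) :
    1 + ‖w‖ ≤ ‖1 + w ^ (1 / 2 : ℂ)‖ ^ 2 := by
  set s := w ^ (1 / 2 : ℂ)
  have hs : ‖1 + s‖ ^ 2 = 1 + 2 * s.re + ‖s‖ ^ 2 := by
    simp only [Complex.sq_norm, normSq_apply, add_re, add_im, one_re, one_im]
    ring
  rw [hs, norm_cpow_one_div_two_sq]
  linarith [re_cpow_one_div_two_nonneg w]

lemma re_I_mul_mul_sub_I_mul_one_sub (c t r : ℝ) (s : ℂ) :
    (I * c * t - I * r * (1 - s)).re = -(r * s.im) := by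
  simp

lemma norm_exp_mul_le_one_of_im_nonneg {c t r x : ℝ} {w : ℂ} (hr : 0 ≤ r) (hw : 0 ≤ w.im)
    (hx : 0 ≤ x) : ‖exp ((I * c * t - I * r * (1 - w ^ (1 / 2 : ℂ))) * x)‖ ≤ 1 := by
  rw [norm_exp, Real.exp_le_one_iff, re_mul_ofReal, re_I_mul_mul_sub_I_mul_one_sub]
  have := mul_nonneg (mul_nonneg hr (im_cpow_one_div_two_nonneg hw)) hx
  linarith

end Complex

lemma Real.sqrt_one_add_sq_le_mul_one_add_abs_one_sub {a : ℝ} (ha : a ≠ 0) (η : ℝ) :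
    √(1 + η ^ 2) ≤ (1 + 1 / |a|) * (1 + |1 - a * η|) := by
  have ha' : 0 < |a| := abs_pos.mpr ha
  have hη : |η| ≤ (1 + |1 - a * η|) / |a| := by
    rw [le_div_iff₀ ha', mul_comm, ← abs_mul]
    have := abs_sub_abs_le_abs_sub (a * η) 1
    rw [abs_one, abs_sub_comm] at this
    linarith
  calc √(1 + η ^ 2) ≤ 1 + |η| := by simpa using sqrt_one_add_norm_sq_le η
    _ ≤ 1 + (1 + |1 - a * η|) / |a| := by linarith
    _ ≤ (1 + 1 / |a|) * (1 + |1 - a * η|) := by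
      rw [add_mul, one_mul, one_div_mul_eq_div]
      linarith [abs_nonneg (1 - a * η)]

lemma sqrt_one_add_sq_le_mul_norm_one_add_cpow_one_div_two_sq {a η : ℝ} (ha : a ≠ 0) {w : ℂ}
    (hw : w.re = 1 - a * η) :
    √(1 + η ^ 2) ≤ (1 + 1 / |a|) * ‖1 + w ^ (1 / 2 : ℂ)‖ ^ 2 := by
  calc √(1 + η ^ 2) ≤ (1 + 1 / |a|) * (1 + |w.re|) := by
        rw [hw]; exact Real.sqrt_one_add_sq_le_mul_one_add_abs_one_sub ha η
    _ ≤ (1 + 1 / |a|) * ‖1 + w ^ (1 / 2 : ℂ)‖ ^ 2 := by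
      gcongr
      linarith [one_add_norm_le_norm_one_add_cpow_one_div_two_sq w, abs_re_le_norm w]

lemma norm_two_mul_mul_div_sq_le {K η : ℝ} {g z d : ℂ} (hd : √(1 + η ^ 2) ≤ K * ‖d‖ ^ 2)
    (hz : ‖z‖ ≤ 1) : ‖2 * g * z / d‖ ^ 2 ≤ 4 * K * (‖g‖ ^ 2 * (1 + η ^ 2) ^ (-(1 : ℝ) / 2)) := by
  have hq : 0 < √(1 + η ^ 2) := Real.sqrt_pos.mpr (by positivity)
  have hKd : 0 < K * ‖d‖ ^ 2 := hq.trans_le hd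
  have hd0 : 0 < ‖d‖ ^ 2 := (sq_nonneg _).lt_of_ne fun h => by simp [← h] at hKd
  rw [neg_div, Real.rpow_neg (by positivity), ← Real.sqrt_eq_rpow, norm_div, norm_mul, norm_mul,
    Complex.norm_two]
  calc (2 * ‖g‖ * ‖z‖ / ‖d‖) ^ 2 ≤ 4 * ‖g‖ ^ 2 / ‖d‖ ^ 2 := by
        rw [div_pow, show (4 : ℝ) * ‖g‖ ^ 2 = (2 * ‖g‖) ^ 2 by ring]
        gcongr ?_ ^ 2 / _
        exact mul_le_of_le_one_right (by positivity) hz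
    _ ≤ 4 * K * (‖g‖ ^ 2 * (√(1 + η ^ 2))⁻¹) := by
      rw [div_le_iff₀ hd0]
      calc 4 * ‖g‖ ^ 2 = 4 * ‖g‖ ^ 2 * (√(1 + η ^ 2))⁻¹ * √(1 + η ^ 2) := by field_simp
        _ ≤ 4 * ‖g‖ ^ 2 * (√(1 + η ^ 2))⁻¹ * (K * ‖d‖ ^ 2) := by gcongr
        _ = _ := by ring

theorem stmt_8_general (ε kx ky ν : ℝ) (hε : 0 < ε) (hkx : 0 < kx) (hky : ky ≠ 0) (hν : 0 < ν)
    (g : ℝ → ℂ)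
    (hg' : Integrable (fun η : ℝ => ‖g η‖ ^ 2 * (1 + η ^ 2) ^ (-(1 : ℝ) / 2)) volume)
    (Rminus : ℝ → ℂ)
    (hm : ∀ η : ℝ, Rminus η = I * (kx / ky : ℝ) * (η : ℂ)
      - I * ((kx / (ε * ky ^ 2) : ℝ) : ℂ) *
      (1 - ((1 : ℂ) - ((2 * ε * ky / kx ^ 2 : ℝ) : ℂ) * (η : ℂ)
        + 2 * (ν : ℂ) * (ε : ℂ) * (ky : ℂ) ^ 2 / (kx : ℂ) ^ 2 * I) ^ ((1 : ℂ) / 2)))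
    (u : ℝ → ℝ → ℂ)
    (hu : ∀ x η, u x η = 2 * g η * Complex.exp (Rminus η * (x : ℂ)) /
      (1 + ((1 : ℂ) - ((2 * ε * ky / kx ^ 2 : ℝ) : ℂ) * (η : ℂ)
        + 2 * (ε : ℂ) * (ν : ℂ) * (ky : ℂ) ^ 2 / (kx : ℂ) ^ 2 * I) ^ ((1 : ℂ) / 2)))
    (C : ℝ) (hC : C = 2 * Real.sqrt (1 + kx ^ 2 / (ε * |ky|))) :
    ∀ x : ℝ, 0 ≤ x →
      ∫ η : ℝ, ‖u x η‖ ^ 2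
        ≤ C ^ 2 * ∫ η : ℝ, ‖g η‖ ^ 2 * (1 + η ^ 2) ^ (-(1 : ℝ) / 2) := by
  intro x hx
  set a : ℝ := 2 * ε * ky / kx ^ 2
  have ha : a ≠ 0 := by positivity
  have hC2 : 4 * (1 + 1 / |a|) ≤ C ^ 2 := by
    have h1a : 1 / |a| ≤ kx ^ 2 / (ε * |ky|) := by
      simp only [a, abs_div, abs_mul, abs_of_pos hε, abs_two, abs_sq, one_div_div]
      gcongr
      linarith
    rw [hC, mul_pow, Real.sq_sqrt (by positivity)]
    linarith
  have hpt : ∀ η, ‖u x η‖ ^ 2 ≤ C ^ 2 * (‖g η‖ ^ 2 * (1 + η ^ 2) ^ (-(1 : ℝ) / 2)) := by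
    intro η
    set w : ℂ := 1 - a * η + 2 * ε * ν * ky ^ 2 / kx ^ 2 * I
    have hw : w = ⟨1 - a * η, 2 * ε * ν * ky ^ 2 / kx ^ 2⟩ := by
      rw [mk_eq_add_mul_I]; push_cast; ring
    have hw_re : w.re = 1 - a * η := by rw [hw]
    have hw_im : w.im = 2 * ε * ν * ky ^ 2 / kx ^ 2 := by rw [hw]
    have hR : Rminus η =
        I * (kx / ky : ℝ) * η - I * (kx / (ε * ky ^ 2) : ℝ) * (1 - w ^ (1 / 2 : ℂ)) := by
      rw [hm, mul_right_comm (2 : ℂ) (ν : ℂ)]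
    rw [hu, hR]
    refine (norm_two_mul_mul_div_sq_le
      (sqrt_one_add_sq_le_mul_norm_one_add_cpow_one_div_two_sq ha hw_re)
      (norm_exp_mul_le_one_of_im_nonneg (by positivity) (by rw [hw_im]; positivity) hx)).trans ?_
    gcongr
  calc ∫ η, ‖u x η‖ ^ 2 ≤ ∫ η, C ^ 2 * (‖g η‖ ^ 2 * (1 + η ^ 2) ^ (-(1 : ℝ) / 2)) :=
        integral_mono_of_nonneg (ae_of_all _ fun η => sq_nonneg _) (hg'.const_mul _)
          (ae_of_all _ hpt)
    _ = C ^ 2 * ∫ η, ‖g η‖ ^ 2 * (1 + η ^ 2) ^ (-(1 : ℝ) / 2) := integral_const_mul _ _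

theorem stmt_8 (ε kx ky ν : ℝ) (hε : 0 < ε) (hkx : 0 < kx) (hky : ky ≠ 0) (hν : 0 < ν)
    (g : ℝ → ℂ) (hg : MemLp g 2 volume)
    (hg' : Integrable (fun η : ℝ => ‖g η‖ ^ 2 * (1 + η ^ 2) ^ (-(1 : ℝ) / 2)) volume)
    (Rminus : ℝ → ℂ)
    (hm : ∀ η : ℝ, Rminus η = I * (kx / ky : ℝ) * (η : ℂ)
      - I * ((kx / (ε * ky ^ 2) : ℝ) : ℂ) *
      (1 - ((1 : ℂ) - ((2 * ε * ky / kx ^ 2 : ℝ) : ℂ) * (η : ℂ)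
        + 2 * (ν : ℂ) * (ε : ℂ) * (ky : ℂ) ^ 2 / (kx : ℂ) ^ 2 * I) ^ ((1 : ℂ) / 2)))
    (u : ℝ → ℝ → ℂ)
    (hu : ∀ x η, u x η = 2 * g η * Complex.exp (Rminus η * (x : ℂ)) /
      (1 + ((1 : ℂ) - ((2 * ε * ky / kx ^ 2 : ℝ) : ℂ) * (η : ℂ)
        + 2 * (ε : ℂ) * (ν : ℂ) * (ky : ℂ) ^ 2 / (kx : ℂ) ^ 2 * I) ^ ((1 : ℂ) / 2)))
    (C : ℝ) (hC : C = 2 * Real.sqrt (1 + kx ^ 2 / (ε * |ky|))) :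
    ∀ x : ℝ, 0 ≤ x →
      ∫ η : ℝ, ‖u x η‖ ^ 2
        ≤ C ^ 2 * ∫ η : ℝ, ‖g η‖ ^ 2 * (1 + η ^ 2) ^ (-(1 : ℝ) / 2) :=
  stmt_8_general ε kx ky ν hε hkx hky hν g hg' Rminus hm u hu C hC
end
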